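/- If ε : X×X∖Δ → P(M) is a Fitch map (i.e., explained by some edge-labeled tree (T,λ)), then the set N[ε] of all complementary neighborhoods N_{¬m}[y] is hierarchy-like, and additionally N[ε] ⊆ C(T) for every tree (T,λ) that explains ε. -/
import Mathlib


/-- A finite rooted phylogenetic tree on leaf set `X`, with vertex type `V`.
Vertices are encoded via a parent function; `par root = root`. -/
structure PhyloTree (V X : Type) : Type where
  fin : Finite V
  root : V
  par : V → V
  par_root : par root = root
  reach : ∀ v : V, ∃ n : ℕ, par^[n] v = root
  leaf : X → V
  leaf_inj : Function.Injective leaf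
  leaf_isLeaf : ∀ (x : X) (u : V), par u = leaf x → u = leaf x
  leaf_only : ∀ v : V, (∀ u : V, par u = v → u = v) → ∃ x : X, leaf x = v
  root_deg : (∃ x : X, leaf x = root) ∨ 2 ≤ {u : V | par u = root ∧ u ≠ root}.ncard
  inner_deg : ∀ v : V, v ≠ root → (¬ ∃ x : X, leaf x = v) →
      2 ≤ {u : V | par u = v ∧ u ≠ v}.ncard

namespace PhyloTree

variable {V X : Type}

/-- `T.anc u v` : `u` is an ancestor of `v`, i.e. `u ⪯_T v`. -/
def anc (T : PhyloTree V X) (u v : V) : Prop := ∃ n : ℕ, T.par^[n] v = u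

/-- `l` is the last common ancestor of `a` and `b`. -/
def IsLca (T : PhyloTree V X) (l a b : V) : Prop :=
  T.anc l a ∧ T.anc l b ∧ ∀ u : V, T.anc u a → T.anc u b → T.anc u l

/-- The cluster of `v`: the set of leaves below `v`. -/
def cluster (T : PhyloTree V X) (v : V) : Set X := {x : X | T.anc v (T.leaf x)}

/-- The cluster set `C(T)`. -/
def clusterSet (T : PhyloTree V X) : Set (Set X) := {S : Set X | ∃ v : V, S = T.cluster v}

/-- The edge `(par u, u)` lies on the descending path from `a` down to `b`. -/
def edgeOnDown (T : PhyloTree V X) (a b u : V) : Prop :=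
  T.anc a u ∧ u ≠ a ∧ T.anc u b

/-- The edge `(par u, u)` lies on the unique path between `v` and `w`. -/
def edgeOnPath (T : PhyloTree V X) (v w u : V) : Prop :=
  ∃ l : V, T.IsLca l v w ∧ (T.edgeOnDown l v u ∨ T.edgeOnDown l w u)

/-- `T` displays the rooted triple `ab|c`. -/
def Displays (T : PhyloTree V X) (a b c : X) : Prop :=
  ∃ l3 l2 : V, T.IsLca l2 (T.leaf a) (T.leaf b) ∧
    T.IsLca l3 l2 (T.leaf c) ∧ l3 ≠ l2

end PhyloTree

/-- `(T, lab)` explains `ε` : for distinct leaves `x,y`, `m ∈ ε x y` iff there is an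
`m`-edge on the path from `lca(x,y)` down to `y`. -/
def Explains {V X M : Type} (T : PhyloTree V X) (lab : V → Set M)
    (ε : X → X → Set M) : Prop :=
  ∀ x y : X, x ≠ y → ∀ m : M,
    (m ∈ ε x y ↔ ∃ l : V, T.IsLca l (T.leaf x) (T.leaf y) ∧
      ∃ u : V, T.edgeOnDown l (T.leaf y) u ∧ m ∈ lab u)

/-- `ε` is a Fitch map: it is explained by some edge-labeled phylogenetic tree. -/
def IsFitchMap {X M : Type} (ε : X → X → Set M) : Prop :=
  ∃ (V : Type) (T : PhyloTree V X) (lab : V → Set M), Explains T lab ε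

/-- The complementary neighborhood `N_{¬m}[y]`. -/
def Nbr {X M : Type} (ε : X → X → Set M) (m : M) (y : X) : Set X :=
  {x : X | x ≠ y ∧ m ∉ ε x y} ∪ {y}

/-- The collection `N[ε]` of all complementary neighborhoods. -/
def NbrSet {X M : Type} (ε : X → X → Set M) : Set (Set X) :=
  {N : Set X | ∃ (m : M) (y : X), N = Nbr ε m y}

/-- A set system is hierarchy-like if any two members intersect in `∅` or one of them. -/
def HLike {X : Type} (H : Set (Set X)) : Prop :=
  ∀ P ∈ H, ∀ Q ∈ H, P ∩ Q = P ∨ P ∩ Q = Q ∨ P ∩ Q = ∅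

/-- The inequality condition (IC). -/
def IneqCond {X M : Type} (ε : X → X → Set M) : Prop :=
  ∀ (m : M) (y y' : X), y' ∈ Nbr ε m y → (Nbr ε m y').ncard ≤ (Nbr ε m y).ncard




namespace PhyloTree

variable {V X : Type}

lemma anc_refl (T : PhyloTree V X) (v : V) : T.anc v v := ⟨0, rfl⟩

lemma anc_trans (T : PhyloTree V X) {a b c : V} (h1 : T.anc a b) (h2 : T.anc b c) :
    T.anc a c := by
  obtain ⟨i, hi⟩ := h1; obtain ⟨j, hj⟩ := h2
  exact ⟨i + j, by rw [Function.iterate_add_apply, hj, hi]⟩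

lemma par_iterate_root (T : PhyloTree V X) (n : ℕ) : T.par^[n] T.root = T.root := by
  induction n with
  | zero => rfl
  | succ k ih => rw [Function.iterate_succ_apply', ih, T.par_root]

lemma eventually_root (T : PhyloTree V X) (v : V) :
    ∃ N, ∀ n, N ≤ n → T.par^[n] v = T.root := by
  obtain ⟨N, hN⟩ := T.reach v
  refine ⟨N, fun n hn => ?_⟩
  have h : T.par^[n] v = T.par^[n - N] (T.par^[N] v) := by
    rw [← Function.iterate_add_apply]; congr 1; omega
  rw [h, hN, T.par_iterate_root]

lemma anc_root (T : PhyloTree V X) (v : V) : T.anc T.root v := T.reach v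

lemma periodic_eq_root (T : PhyloTree V X) {u : V} {p : ℕ} (hp : 0 < p)
    (h : T.par^[p] u = u) : u = T.root := by
  have hit : ∀ k, T.par^[k * p] u = u := by
    intro k
    induction k with
    | zero => simp
    | succ k ih => rw [Nat.succ_mul, Function.iterate_add_apply, h, ih]
  obtain ⟨N, hN⟩ := T.eventually_root u
  have h1 := hit (N + 1)
  have h2 := hN ((N + 1) * p) (by nlinarith)
  rw [h2] at h1; exact h1.symm

lemma anc_antisymm (T : PhyloTree V X) {u v : V} (h1 : T.anc u v) (h2 : T.anc v u) :
    u = v := by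
  obtain ⟨i, hi⟩ := h1; obtain ⟨j, hj⟩ := h2
  rcases Nat.eq_zero_or_pos (j + i) with h | h
  · have hi0 : i = 0 := by omega
    rw [hi0] at hi; exact hi.symm
  · have hper : T.par^[j + i] v = v := by
      rw [Function.iterate_add_apply, hi, hj]
    have hv : v = T.root := T.periodic_eq_root h hper
    have hu : u = T.root := by rw [← hi, hv, T.par_iterate_root]
    rw [hu, hv]
  
lemma anc_comparable (T : PhyloTree V X) {u v w : V} (h1 : T.anc u w) (h2 : T.anc v w) :
    T.anc u v ∨ T.anc v u := by
  obtain ⟨i, hi⟩ := h1; obtain ⟨j, hj⟩ := h2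
  rcases le_total i j with h | h
  · right
    refine ⟨j - i, ?_⟩
    rw [← hi, ← Function.iterate_add_apply, ← hj]
    congr 1; omega
  · left
    refine ⟨i - j, ?_⟩
    rw [← hj, ← Function.iterate_add_apply, ← hi]
    congr 1; omega

lemma chain_eq_root (T : PhyloTree V X) {b : V} {j k : ℕ} (hjk : j < k)
    (h : T.par^[j] b = T.par^[k] b) : T.par^[j] b = T.root := by
  refine T.periodic_eq_root (p := k - j) (by omega) ?_
  rw [← Function.iterate_add_apply]
  rw [show k - j + j = k by omega, ← h]

lemma cluster_mono (T : PhyloTree V X) {u v : V} (h : T.anc u v) :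
    T.cluster v ⊆ T.cluster u := fun x hx => T.anc_trans h hx

lemma lca_exists (T : PhyloTree V X) (a b : V) : ∃ l, T.IsLca l a b := by
  classical
  have hex : ∃ n, T.anc (T.par^[n] b) a := by
    obtain ⟨N, hN⟩ := T.reach b
    exact ⟨N, by rw [hN]; exact T.anc_root a⟩
  refine ⟨T.par^[Nat.find hex] b, Nat.find_spec hex, ⟨Nat.find hex, rfl⟩, ?_⟩
  intro u hua hub
  obtain ⟨k, hk⟩ := hub
  have hle : Nat.find hex ≤ k := Nat.find_min' hex (by rw [hk]; exact hua)
  refine ⟨k - Nat.find hex, ?_⟩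
  rw [← Function.iterate_add_apply, show k - Nat.find hex + Nat.find hex = k by omega, hk]

lemma lca_unique (T : PhyloTree V X) {l l' a b : V} (h1 : T.IsLca l a b)
    (h2 : T.IsLca l' a b) : l = l' :=
  T.anc_antisymm (h2.2.2 l h1.1 h1.2.1) (h1.2.2 l' h2.1 h2.2.1)

lemma anc_leaf (T : PhyloTree V X) {x y : X} (h : T.anc (T.leaf y) (T.leaf x)) : x = y := by
  obtain ⟨n, hn⟩ := h
  have key : ∀ n (w : V), T.par^[n] w = T.leaf y → w = T.leaf y := by
    intro n
    induction n with
    | zero => intro w hw; exact hw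
    | succ k ih =>
      intro w hw
      rw [Function.iterate_succ_apply] at hw
      exact T.leaf_isLeaf y w (ih _ hw)
  exact T.leaf_inj (key n _ hn)

end PhyloTree


lemma nbr_eq_cluster {V X M : Type} (T : PhyloTree V X) (lab : V → Set M)
    (ε : X → X → Set M) (hE : Explains T lab ε) (m : M) (y : X) :
    ∃ v : V, Nbr ε m y = T.cluster v := by
  classical
  set b := T.leaf y with hb
  -- characterize existence of an m-edge on the down-path from an ancestor of b
  have edgeChar : ∀ k : ℕ, (∃ u, T.edgeOnDown (T.par^[k] b) b u ∧ m ∈ lab u) ↔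
      ∃ j, j < k ∧ m ∈ lab (T.par^[j] b) ∧ T.par^[j] b ≠ T.root := by
    intro k
    constructor
    · rintro ⟨u, ⟨hlu, hne, hub⟩, hm⟩
      obtain ⟨j, hj⟩ := hub
      refine ⟨j, ?_, by rw [hj]; exact hm, ?_⟩
      · by_contra hge
        push_neg at hge
        have hanc : T.anc u (T.par^[k] b) :=
          ⟨j - k, by rw [← Function.iterate_add_apply, show j - k + k = j by omega, hj]⟩
        exact hne (T.anc_antisymm hanc hlu)
      · intro hr
        have hu : u = T.root := by rw [← hj, hr]
        obtain ⟨n, hn⟩ := hlu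
        rw [hu, T.par_iterate_root] at hn
        exact hne (hu.trans hn)
    · rintro ⟨j, hjk, hm, hroot⟩
      refine ⟨T.par^[j] b, ⟨⟨k - j, ?_⟩, ?_, ⟨j, rfl⟩⟩, hm⟩
      · rw [← Function.iterate_add_apply, show k - j + j = k by omega]
      · intro he
        exact hroot (T.chain_eq_root hjk he)
  -- choose the vertex v
  obtain ⟨v, hvb, key⟩ : ∃ v, T.anc v b ∧ ∀ l, T.anc l b →
      ((¬ ∃ u, T.edgeOnDown l b u ∧ m ∈ lab u) ↔ T.anc v l) := by
    by_cases hQ : ∃ k, m ∈ lab (T.par^[k] b) ∧ T.par^[k] b ≠ T.root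
    · set k0 := Nat.find hQ with hk0
      have hspec := Nat.find_spec hQ
      refine ⟨T.par^[k0] b, ⟨k0, rfl⟩, ?_⟩
      rintro l ⟨k, hk⟩
      rw [← hk]
      rcases le_or_gt k k0 with hkk | hkk
      · constructor
        · intro _
          exact ⟨k0 - k, by rw [← Function.iterate_add_apply,
            show k0 - k + k = k0 by omega]⟩
        · intro _
          rw [edgeChar k]
          rintro ⟨j, hjk, hm, hroot⟩
          exact Nat.find_min hQ (show j < k0 by omega) ⟨hm, hroot⟩
      · constructor
        · intro hno
          exfalso
          exact hno ((edgeChar k).mpr ⟨k0, hkk, hspec.1, hspec.2⟩)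
        · rintro ⟨n, hn⟩
          exfalso
          have hper : T.par^[n + k] b = T.par^[k0] b := by
            rw [Function.iterate_add_apply, hn]
          exact hspec.2 (T.chain_eq_root (show k0 < n + k by omega) hper.symm)
    · push_neg at hQ
      refine ⟨T.root, T.anc_root b, ?_⟩
      rintro l ⟨k, hk⟩
      rw [← hk]
      constructor
      · intro _
        exact T.anc_root _
      · intro _
        rw [edgeChar k]
        rintro ⟨j, _, hm, hroot⟩
        exact hroot (hQ j hm)
  refine ⟨v, ?_⟩
  ext x
  simp only [Nbr, Set.mem_union, Set.mem_setOf_eq, Set.mem_singleton_iff,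
    PhyloTree.cluster]
  by_cases hxy : x = y
  · subst hxy
    constructor
    · intro _; exact hvb
    · intro _; exact Or.inr rfl
  · obtain ⟨l0, hl0⟩ := T.lca_exists (T.leaf x) b
    have hspec := hE x y hxy m
    rw [← hb] at hspec
    have hex : (∃ l, T.IsLca l (T.leaf x) b ∧
        ∃ u, T.edgeOnDown l b u ∧ m ∈ lab u) ↔
        (∃ u, T.edgeOnDown l0 b u ∧ m ∈ lab u) := by
      constructor
      · rintro ⟨l, hl, hu⟩
        rwa [T.lca_unique hl hl0] at hu
      · intro hu
        exact ⟨l0, hl0, hu⟩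
    have hxv : T.anc v (T.leaf x) ↔ T.anc v l0 := by
      constructor
      · intro hv; exact hl0.2.2 v hv hvb
      · intro hv; exact T.anc_trans hv hl0.1
    constructor
    · rintro (⟨_, hne⟩ | heq)
      · rw [hspec] at hne
        rw [hxv]
        exact (key l0 hl0.2.1).mp (by rwa [hex] at hne)
      · exact absurd heq hxy
    · intro hcl
      left
      refine ⟨hxy, ?_⟩
      rw [hspec, hex]
      exact (key l0 hl0.2.1).mpr (hxv.mp hcl)


lemma cluster_inter {V X : Type} (T : PhyloTree V X) (u v : V) :
    T.cluster u ∩ T.cluster v = T.cluster u ∨ T.cluster u ∩ T.cluster v = T.cluster v ∨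
    T.cluster u ∩ T.cluster v = ∅ := by
  by_cases hx : (T.cluster u ∩ T.cluster v).Nonempty
  · obtain ⟨x, hxu, hxv⟩ := hx
    rcases T.anc_comparable hxu hxv with h | h
    · right; left; exact Set.inter_eq_right.mpr (T.cluster_mono h)
    · left; exact Set.inter_eq_left.mpr (T.cluster_mono h)
  · right; right; exact Set.not_nonempty_iff_eq_empty.mp hx

/-- for a Fitch map `ε`, `N[ε]` is hierarchy-like, and `N[ε] ⊆ C(T)`
for every edge-labeled tree `(T,lab)` explaining `ε`. -/
theorem fitch_HLC {X M : Type} [Fintype X] [Fintype M] [Nonempty X] [Nonempty M]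
    (ε : X → X → Set M) (h : IsFitchMap ε) :
    HLike (NbrSet ε) ∧
    ∀ (V : Type) (T : PhyloTree V X) (lab : V → Set M),
      Explains T lab ε → NbrSet ε ⊆ T.clusterSet := by
  obtain ⟨V0, T0, lab0, hE0⟩ := h
  constructor
  · rintro P ⟨mP, yP, rfl⟩ Q ⟨mQ, yQ, rfl⟩
    obtain ⟨u, hu⟩ := nbr_eq_cluster T0 lab0 ε hE0 mP yP
    obtain ⟨v, hv⟩ := nbr_eq_cluster T0 lab0 ε hE0 mQ yQ
    rw [hu, hv]
    exact cluster_inter T0 u v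
  · rintro V T lab hE N ⟨m, y, rfl⟩
    obtain ⟨v, hv⟩ := nbr_eq_cluster T lab ε hE m y
    exact ⟨v, hv⟩
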